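/- arXiv:1901.05882 — 3 statements merged into one kernel-verified Lean document; each statement's English description precedes it below -/
import Mathlib

section
/- There is no basis (e_1, e_2) of the algebra B (i.e., no pair of elements of B that is linearly independent over ℂ) satisfying e_2^4 + (p^2+1)·e_1^2·e_2^2 + p^2·e_1^4 = 0, for any real p > 0 with p ≠ 1. -/
/-!
Identify `B` with the dual numbers `ℂ[ε]`. The quartic factors as
`∏ (e₂ - λ • e₁)` over the four distinct roots `λ = ±i, ±ip`. Under `fst : ℂ[ε] → ℂ`, which is a
ring map whose kernel `ℂ ε` is one-dimensional, at most one factor can lie in the kernel: two of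
them would put `e₁` and `e₂` both in `ℂ ε`. Since the product vanishes, exactly one factor is a
non-unit and the others are units, so that factor is zero, i.e. `e₂ = λ • e₁`.
-/

open DualNumber TrivSqZeroExt

namespace DualNumber

variable {K : Type*} [Field K]

theorem eq_snd_smul_eps_of_fst_eq_zero {x : K[ε]} (hx : x.fst = 0) : x = x.snd • ε := by
  ext <;> simp [hx]

theorem not_linearIndependent_of_fst_eq_zero {x y : K[ε]} (hx : x.fst = 0) (hy : y.fst = 0) :
    ¬ LinearIndependent K ![x, y] := by
  intro h
  have hxy : y.snd • x = x.snd • y := by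
    ext <;> simp [hx, hy, mul_comm]
  obtain ⟨-, hx0⟩ := h.eq_zero_of_pair' hxy
  exact h.ne_zero 0 (by simpa [hx0] using eq_snd_smul_eps_of_fst_eq_zero hx)

theorem fst_sub_smul_ne_zero {e₁ e₂ : K[ε]} (h : LinearIndependent K ![e₁, e₂]) {a b : K}
    (hab : a ≠ b) (ha : (e₂ - a • e₁).fst = 0) : (e₂ - b • e₁).fst ≠ 0 := by
  intro hb
  simp only [fst_sub, fst_smul, smul_eq_mul, sub_eq_zero] at ha hb
  have h₁ : e₁.fst = 0 := by
    have : (a - b) * e₁.fst = 0 := by linear_combination hb - ha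
    exact (mul_eq_zero.mp this).resolve_left (sub_ne_zero.mpr hab)
  exact not_linearIndependent_of_fst_eq_zero h₁ (by rw [ha, h₁, mul_zero]) h

theorem prod_sub_smul_ne_zero {n : ℕ} {e₁ e₂ : K[ε]} (h : LinearIndependent K ![e₁, e₂])
    {c : Fin n → K} (hc : Function.Injective c) : ∏ i, (e₂ - c i • e₁) ≠ 0 := by
  intro hprod
  have hfst : ∏ i, (e₂ - c i • e₁).fst = 0 := by
    simpa [map_prod] using congrArg (fstHom K K K) hprod
  obtain ⟨i, -, hi⟩ := Finset.prod_eq_zero_iff.mp hfst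
  have hunit : IsUnit (∏ j ∈ Finset.univ.erase i, (e₂ - c j • e₁)) := by
    rw [isUnit_iff_isUnit_fst, ← fstHom_apply K, map_prod]
    refine IsUnit.mk0 _ (Finset.prod_ne_zero_iff.mpr fun j hj => ?_)
    exact fst_sub_smul_ne_zero h (hc.ne (Finset.ne_of_mem_erase hj).symm) hi
  rw [← Finset.mul_prod_erase _ _ (Finset.mem_univ i), hunit.mul_left_eq_zero,
    sub_eq_zero] at hprod
  exact one_ne_zero (h.eq_zero_of_pair' (s := c i) (t := 1) (by rw [one_smul, hprod])).2

end DualNumber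

namespace Module.Basis

variable {K B : Type*} [Field K] [CommRing B] [Algebra K B]

theorem bijective_dualNumberLift (b : Basis (Fin 2) K B) {ρ : B} (hρ : ρ * ρ = 0)
    (hb0 : b 0 = 1) (hb1 : b 1 = ρ) :
    Function.Bijective (lift ⟨(Algebra.ofId K B, ρ), hρ, fun _ => Commute.all _ _⟩) := by
  have hlift (x : K[ε]) :
      lift ⟨(Algebra.ofId K B, ρ), hρ, fun _ => Commute.all _ _⟩ x = x.fst • b 0 + x.snd • b 1 := by
    simp [lift_apply_apply, hb0, hb1, Algebra.smul_def]
  refine ⟨fun x y hxy => ?_, fun y => ⟨inl (b.repr y 0) + inr (b.repr y 1), ?_⟩⟩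
  · rw [hlift, hlift] at hxy
    exact TrivSqZeroExt.ext (by simpa using congrArg (b.repr · 0) hxy)
      (by simpa using congrArg (b.repr · 1) hxy)
  · rw [hlift, fst_add, snd_add, fst_inl, fst_inr, snd_inl, snd_inr, add_zero, zero_add,
      ← Fin.sum_univ_two (fun i => b.repr y i • b i), b.sum_repr]

noncomputable def algEquivDualNumber (b : Basis (Fin 2) K B) {ρ : B} (hρ : ρ ^ 2 = 0)
    (hb0 : b 0 = 1) (hb1 : b 1 = ρ) : K[ε] ≃ₐ[K] B :=
  AlgEquiv.ofBijective _ (b.bijective_dualNumberLift (by rwa [← sq]) hb0 hb1)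

end Module.Basis

theorem quartic_eq_prod_sub_smul {A : Type*} [CommRing A] [Algebra ℂ A] (x y : A) (p : ℂ) :
    y ^ 4 + (p ^ 2 + 1) • (x ^ 2 * y ^ 2) + p ^ 2 • x ^ 4
      = ∏ i, (y - ![Complex.I, -Complex.I, p * Complex.I, -(p * Complex.I)] i • x) := by
  have hI : algebraMap ℂ A Complex.I ^ 2 = -1 := by
    rw [← map_pow, Complex.I_sq, map_neg, map_one]
  simp only [Fin.prod_univ_four, Matrix.cons_val, Algebra.smul_def, map_add, map_pow, map_mul,
    map_neg, map_one]
  linear_combination ((algebraMap ℂ A p ^ 2 + 1) * x ^ 2 * y ^ 2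
    + algebraMap ℂ A p ^ 2 * x ^ 4 * (1 - algebraMap ℂ A Complex.I ^ 2)) * hI

theorem injective_quartic_roots {p : ℝ} (hp : 0 < p) (hp1 : p ≠ 1) :
    Function.Injective ![Complex.I, -Complex.I, (p : ℂ) * Complex.I, -((p : ℂ) * Complex.I)] := by
  intro i j hij
  fin_cases i <;> fin_cases j <;> simp [Complex.ext_iff] at hij ⊢ <;> grind

/-- For real `p > 0`, `p ≠ 1`, the dual-number algebra `B = ℂ[ρ]/(ρ²)` contains
no basis `(e₁, e₂)` (pair linearly independent over ℂ) with
`e₂⁴ + (p²+1) e₁² e₂² + p² e₁⁴ = 0`. -/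
theorem stmt_7 {B : Type*} [CommRing B] [Algebra ℂ B]
    (ρ : B) (hρ : ρ ^ 2 = 0)
    (b : Module.Basis (Fin 2) ℂ B) (hb0 : b 0 = 1) (hb1 : b 1 = ρ)
    (p : ℝ) (hp : 0 < p) (hp1 : p ≠ 1) :
    ¬ ∃ e1 e2 : B, LinearIndependent ℂ ![e1, e2] ∧
      e2 ^ 4 + ((p : ℂ) ^ 2 + 1) • (e1 ^ 2 * e2 ^ 2) + ((p : ℂ) ^ 2) • e1 ^ 4 = 0 := by
  rintro ⟨e1, e2, hli, heq⟩
  set φ := (b.algEquivDualNumber hρ hb0 hb1).symm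
  have hli' : LinearIndependent ℂ ![φ e1, φ e2] := by
    have := hli.map' φ.toLinearMap φ.toLinearEquiv.ker
    rwa [← FinVec.map_eq] at this
  apply DualNumber.prod_sub_smul_ne_zero hli' (injective_quartic_roots hp hp1)
  refine (quartic_eq_prod_sub_smul (φ e1) (φ e2) p).symm.trans ?_
  simpa using congrArg φ heq
end

section
/- For any nonzero complex numbers α, β and any two distinct roots s̃_1 ≠ s̃_2 of s^4 + (p^2+1)s^2 + p^2 = 0, the elements e_1 = α·I_1 + β·I_2 and e_2 = α·s̃_1·I_1 + β·s̃_2·I_2 form a ℂ-basis of B_0 and satisfy e_2^4 + (p^2+1)·e_1^2·e_2^2 + p^2·e_1^4 = 0. -/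
/-!
Since `ω² = 1`, `I₁ = (1 + ω)/2` is an idempotent with complement `I₂ = 1 - I₁`, so
`(x, y) ↦ x I₁ + y I₂` is a ℂ-algebra map `ℂ × ℂ → B₀`, injective because `1, ω` are
independent. Then `e₁, e₂` are the images of `(α, β)` and `(α s₁, β s₂)`: the quartic identity
holds componentwise because `s₁, s₂` are roots, and the pair is independent because a scalar
relation would force `s₁ = s₂`.
-/

namespace IsIdempotentElem

variable {R A : Type*} [CommRing R] [Ring A] [Algebra R A] {e : A}

def prodAlgHom (he : IsIdempotentElem e) : R × R →ₐ[R] A :=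
  AlgHom.ofLinearMap
    ((LinearMap.toSpanSingleton R A e).coprod (LinearMap.toSpanSingleton R A (1 - e)))
    (by simp)
    (fun x y => by
      simp only [LinearMap.coprod_apply, LinearMap.toSpanSingleton_apply, Prod.fst_mul,
        Prod.snd_mul, add_mul, mul_add, smul_mul_smul_comm, he.eq, he.one_sub.eq,
        he.mul_one_sub_self, he.one_sub_mul_self, smul_zero, add_zero, zero_add])

@[simp]
lemma prodAlgHom_apply (he : IsIdempotentElem e) (x : R × R) :
    he.prodAlgHom x = x.1 • e + x.2 • (1 - e) :=
  rfl

lemma prodAlgHom_injective {K : Type*} [Field K] [Algebra K A] (he : IsIdempotentElem e)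
    (he0 : e ≠ 0) (he1 : e ≠ 1) : Function.Injective (he.prodAlgHom (R := K)) := by
  refine (injective_iff_map_eq_zero _).mpr fun x hx => ?_
  have h1 : x.1 • e = 0 := by
    simpa [mul_add, he.eq, he.mul_one_sub_self] using congrArg (e * ·) hx
  have h2 : x.2 • (1 - e) = 0 := by
    simpa [mul_add, he.one_sub.eq, he.one_sub_mul_self] using congrArg ((1 - e) * ·) hx
  exact Prod.ext ((smul_eq_zero.mp h1).resolve_right he0)
    ((smul_eq_zero.mp h2).resolve_right (sub_ne_zero.mpr he1.symm))

end IsIdempotentElem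

lemma isIdempotentElem_inv_two_smul_one_add {K A : Type*} [Field K] [Ring A] [Algebra K A]
    (h2 : (2 : K) ≠ 0) {ω : A} (hω : ω ^ 2 = 1) :
    IsIdempotentElem ((2 : K)⁻¹ • (1 + ω)) := by
  have hsq : (1 + ω) * (1 + ω) = (2 : K) • (1 + ω) := by
    rw [two_smul, mul_add, mul_one, add_mul, one_mul, ← sq, hω]; abel
  rw [IsIdempotentElem, smul_mul_smul_comm, hsq, smul_smul, mul_assoc, inv_mul_cancel₀ h2,
    mul_one]

lemma LinearIndependent.smul_add_smul_ne_zero {R M : Type*} [Ring R] [AddCommGroup M]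
    [Module R M] {x y : M} (h : LinearIndependent R ![x, y]) {a : R} (ha : a ≠ 0) (b : R) :
    a • x + b • y ≠ 0 :=
  fun h0 => ha (LinearIndependent.pair_iff.mp h a b h0).1

lemma linearIndependent_pair_mk_mul {K : Type*} [Field K] {α β s₁ s₂ : K} (hα : α ≠ 0)
    (hβ : β ≠ 0) (hs : s₁ ≠ s₂) : LinearIndependent K ![(α, β), (α * s₁, β * s₂)] := by
  refine (LinearIndependent.pair_iff' (by simp [hα])).mpr fun a ha => hs ?_
  simp only [Prod.smul_mk, smul_eq_mul, Prod.mk.injEq] at ha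
  exact (mul_left_cancel₀ hα (ha.1.symm.trans (mul_comm a α))).trans
    (mul_left_cancel₀ hβ (ha.2.symm.trans (mul_comm a β))).symm

lemma prod_mk_mul_quartic_eq_zero {K : Type*} [CommRing K] {c d α β s₁ s₂ : K}
    (hs₁ : s₁ ^ 4 + c * s₁ ^ 2 + d = 0) (hs₂ : s₂ ^ 4 + c * s₂ ^ 2 + d = 0) :
    (α * s₁, β * s₂) ^ 4 + c • ((α, β) ^ 2 * (α * s₁, β * s₂) ^ 2) + d • (α, β) ^ 4 = 0 := by
  ext
  · simp only [Prod.fst_add, Prod.smul_fst, Prod.fst_mul, Prod.pow_fst, smul_eq_mul,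
      Prod.fst_zero]
    linear_combination α ^ 4 * hs₁
  · simp only [Prod.snd_add, Prod.smul_snd, Prod.snd_mul, Prod.pow_snd, smul_eq_mul,
      Prod.snd_zero]
    linear_combination β ^ 4 * hs₂

theorem stmt_8_general {B : Type*} [CommRing B] [Algebra ℂ B]
    (ω : B) (hω : ω ^ 2 = 1)
    (b : Module.Basis (Fin 2) ℂ B) (hb0 : b 0 = 1) (hb1 : b 1 = ω)
    (I1 I2 : B) (hI1 : I1 = (2 : ℂ)⁻¹ • (1 + ω)) (hI2 : I2 = (2 : ℂ)⁻¹ • (1 - ω))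
    (p : ℝ)
    (α β s1 s2 : ℂ) (hα : α ≠ 0) (hβ : β ≠ 0)
    (hs1 : s1 ^ 4 + ((p : ℂ) ^ 2 + 1) * s1 ^ 2 + (p : ℂ) ^ 2 = 0)
    (hs2 : s2 ^ 4 + ((p : ℂ) ^ 2 + 1) * s2 ^ 2 + (p : ℂ) ^ 2 = 0)
    (hs : s1 ≠ s2)
    (e1 e2 : B) (he1 : e1 = α • I1 + β • I2)
    (he2 : e2 = (α * s1) • I1 + (β * s2) • I2) :
    LinearIndependent ℂ ![e1, e2] ∧
    e2 ^ 4 + ((p : ℂ) ^ 2 + 1) • (e1 ^ 2 * e2 ^ 2) + ((p : ℂ) ^ 2) • e1 ^ 4 = 0 := by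
  have hI : IsIdempotentElem I1 := hI1 ▸ isIdempotentElem_inv_two_smul_one_add two_ne_zero hω
  have hI2' : I2 = 1 - I1 := by rw [hI1, hI2]; module
  set φ := hI.prodAlgHom (R := ℂ)
  have hφ1 : e1 = φ (α, β) := by simp [φ, he1, hI2']
  have hφ2 : e2 = φ (α * s1, β * s2) := by simp [φ, he2, hI2']
  refine ⟨?_, ?_⟩
  · have h1ω : LinearIndependent ℂ ![1, ω] := by
      convert b.linearIndependent; ext i; fin_cases i <;> simp [hb0, hb1]
    have hI0 : I1 ≠ 0 := by
      rw [hI1, smul_add]; exact h1ω.smul_add_smul_ne_zero (by norm_num) _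
    have hI1' : I1 ≠ 1 := fun h =>
      h1ω.smul_add_smul_ne_zero (a := (2 : ℂ)⁻¹) (by norm_num) (-2⁻¹)
        (by rw [neg_smul, ← sub_eq_add_neg, ← smul_sub, ← hI2, hI2', h, sub_self])
    have he : ![e1, e2] = φ.toLinearMap ∘ ![(α, β), (α * s1, β * s2)] := by
      ext i; fin_cases i <;> simp [hφ1, hφ2]
    rw [he]
    exact (linearIndependent_pair_mk_mul hα hβ hs).map' φ.toLinearMap
      (LinearMap.ker_eq_bot.mpr (hI.prodAlgHom_injective hI0 hI1'))
  · rw [hφ1, hφ2]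
    simpa only [map_add, map_smul, map_mul, map_pow, map_zero] using
      congrArg φ (prod_mk_mul_quartic_eq_zero (α := α) (β := β) hs1 hs2)

/-- For nonzero `α, β ∈ ℂ` and distinct roots `s₁ ≠ s₂` of
`s⁴ + (p²+1)s² + p² = 0`, the elements `e₁ = α I₁ + β I₂` and
`e₂ = α s₁ I₁ + β s₂ I₂` form a ℂ-basis of `B₀` and satisfy
`e₂⁴ + (p²+1) e₁² e₂² + p² e₁⁴ = 0`. -/
theorem stmt_8 {B : Type*} [CommRing B] [Algebra ℂ B]
    (ω : B) (hω : ω ^ 2 = 1)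
    (b : Module.Basis (Fin 2) ℂ B) (hb0 : b 0 = 1) (hb1 : b 1 = ω)
    (I1 I2 : B) (hI1 : I1 = (2 : ℂ)⁻¹ • (1 + ω)) (hI2 : I2 = (2 : ℂ)⁻¹ • (1 - ω))
    (p : ℝ) (hp : 0 < p) (hp1 : p ≠ 1)
    (α β s1 s2 : ℂ) (hα : α ≠ 0) (hβ : β ≠ 0)
    (hs1 : s1 ^ 4 + ((p : ℂ) ^ 2 + 1) * s1 ^ 2 + (p : ℂ) ^ 2 = 0)
    (hs2 : s2 ^ 4 + ((p : ℂ) ^ 2 + 1) * s2 ^ 2 + (p : ℂ) ^ 2 = 0)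
    (hs : s1 ≠ s2)
    (e1 e2 : B) (he1 : e1 = α • I1 + β • I2)
    (he2 : e2 = (α * s1) • I1 + (β * s2) • I2) :
    LinearIndependent ℂ ![e1, e2] ∧
    e2 ^ 4 + ((p : ℂ) ^ 2 + 1) • (e1 ^ 2 * e2 ^ 2) + ((p : ℂ) ^ 2) • e1 ^ 4 = 0 :=
  stmt_8_general ω hω b hb0 hb1 I1 I2 hI1 hI2 p α β s1 s2 hα hβ hs1 hs2 hs e1 e2 he1 he2
end

section
/- If F_1 : D_z → ℂ and F_2 : D_{z_p} → ℂ are holomorphic, then the function Φ(ζ) := F_1(z)·I_1 + F_2(z_p)·I_2 (where ζ = x e_1 + y e_2, z = x+iy, z_p = x+ipy) satisfies the Cauchy–Riemann-type condition ∂Φ/∂y · e_1 = ∂Φ/∂x · e_2 on D_ζ, i.e., Φ is monogenic. -/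
open Complex

/-- The concrete model of `B₀ = ℂ[ω]/(ω²−1)`: the product algebra `ℂ × ℂ`. -/
abbrev B0 : Type := ℂ × ℂ

/-- The element `ω` with `ω² = 1`. -/
def omegaB : B0 := (1, -1)

/-- The idempotent `I₁ = (1+ω)/2`. -/
noncomputable def Io1 : B0 := (2 : ℂ)⁻¹ • (1 + omegaB)

/-- The idempotent `I₂ = (1−ω)/2`. -/
noncomputable def Io2 : B0 := (2 : ℂ)⁻¹ • (1 - omegaB)

/-- The basis element `e₁ = e`. -/
noncomputable def eb1 : B0 := 1

/-- The basis element `e₂ = i(I₁ + p I₂)`. -/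
noncomputable def eb2 (p : ℝ) : B0 := Complex.I • (Io1 + (p : ℂ) • Io2)

/-!
In the idempotent basis `B₀ ≅ ℂ × ℂ` we have `I₁ = (1, 0)`, `I₂ = (0, 1)`, `e₁ = (1, 1)` and
`e₂ = (i, i p)`, so `Φ = (F₁ ∘ ℓ_i, F₂ ∘ ℓ_{ip})` with `ℓ_a (x, y) = x + a y`. By the chain rule
a function `F ∘ ℓ_a` with `F` complex differentiable satisfies `∂_y (F ∘ ℓ_a) = a · ∂_x (F ∘ ℓ_a)`,
and the two factors `a = i` and `a = i p` are exactly the components of `e₂`.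
-/

noncomputable def planeToComplex (a : ℂ) : (ℝ × ℝ) →L[ℝ] ℂ :=
  Complex.ofRealCLM.comp (ContinuousLinearMap.fst ℝ ℝ ℝ) +
    a • Complex.ofRealCLM.comp (ContinuousLinearMap.snd ℝ ℝ ℝ)

@[simp]
lemma planeToComplex_apply (a : ℂ) (q : ℝ × ℝ) : planeToComplex a q = q.1 + a * q.2 := by
  simp [planeToComplex]

lemma hasFDerivAt_comp_planeToComplex (a : ℂ) {F : ℂ → ℂ} {q : ℝ × ℝ}
    (hF : DifferentiableAt ℂ F (planeToComplex a q)) :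
    HasFDerivAt (F ∘ planeToComplex a) (deriv F (planeToComplex a q) • planeToComplex a) q :=
  hF.hasDerivAt.comp_hasFDerivAt q (planeToComplex a).hasFDerivAt

lemma Io1_eq : Io1 = (1, 0) := by
  norm_num [Io1, omegaB, Prod.ext_iff]

lemma Io2_eq : Io2 = (0, 1) := by
  norm_num [Io2, omegaB, Prod.ext_iff]

lemma eb2_eq (p : ℝ) : eb2 p = (Complex.I, Complex.I * p) := by
  simp [eb2, Io1_eq, Io2_eq]

theorem stmt_15_general (p : ℝ)
    (D : Set (ℝ × ℝ))
    (F1 F2 : ℂ → ℂ)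
    (hF1 : ∀ q ∈ D, DifferentiableAt ℂ F1 ((q.1 : ℂ) + Complex.I * (q.2 : ℂ)))
    (hF2 : ∀ q ∈ D, DifferentiableAt ℂ F2 ((q.1 : ℂ) + Complex.I * (p : ℂ) * (q.2 : ℂ)))
    (Φ : ℝ × ℝ → B0)
    (hΦ : Φ = fun q => F1 ((q.1 : ℂ) + Complex.I * (q.2 : ℂ)) • Io1
      + F2 ((q.1 : ℂ) + Complex.I * (p : ℂ) * (q.2 : ℂ)) • Io2) :
    ∀ q ∈ D, fderiv ℝ Φ q (0, 1) * eb1 = fderiv ℝ Φ q (1, 0) * eb2 p := by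
  intro q hq
  have hΦ_pair : Φ = fun r =>
      ((F1 ∘ planeToComplex Complex.I) r, (F2 ∘ planeToComplex (Complex.I * p)) r) := by
    ext r <;> simp [hΦ, Io1_eq, Io2_eq]
  have hΦ_deriv := (hasFDerivAt_comp_planeToComplex _ (by simpa using hF1 q hq)).prodMk
    (hasFDerivAt_comp_planeToComplex _ (by simpa using hF2 q hq))
  rw [hΦ_pair, hΦ_deriv.fderiv]
  simp [eb1, eb2_eq]

/-- If `F₁`, `F₂` are holomorphic on `D_z` and `D_{z_p}`, then
`Φ(ζ) = F₁(z) I₁ + F₂(z_p) I₂` satisfies the Cauchy–Riemann-type condition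
`(∂Φ/∂y)·e₁ = (∂Φ/∂x)·e₂` on `D_ζ`, i.e. `Φ` is monogenic. -/
theorem stmt_15 (p : ℝ) (hp : 0 < p) (hp1 : p ≠ 1)
    (D : Set (ℝ × ℝ)) (hD : IsOpen D)
    (F1 F2 : ℂ → ℂ)
    (hF1 : ∀ q ∈ D, DifferentiableAt ℂ F1 ((q.1 : ℂ) + Complex.I * (q.2 : ℂ)))
    (hF2 : ∀ q ∈ D, DifferentiableAt ℂ F2 ((q.1 : ℂ) + Complex.I * (p : ℂ) * (q.2 : ℂ)))
    (Φ : ℝ × ℝ → B0)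
    (hΦ : Φ = fun q => F1 ((q.1 : ℂ) + Complex.I * (q.2 : ℂ)) • Io1
      + F2 ((q.1 : ℂ) + Complex.I * (p : ℂ) * (q.2 : ℂ)) • Io2) :
    ∀ q ∈ D, fderiv ℝ Φ q (0, 1) * eb1 = fderiv ℝ Φ q (1, 0) * eb2 p :=
  stmt_15_general p D F1 F2 hF1 hF2 Φ hΦ
end
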